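/- arXiv:2404.08862 — 3 statements merged into one kernel-verified Lean document; each statement's English description precedes it below -/
import Mathlib

section
/- Treating a and ā as independent variables, the identity (a/2)·conj(∂p₂/∂ā) − D·(∂p₃/∂a) + ∂p₄/∂a = −(1/2)·p̄₂ + ā·p₃ holds, where D = aā + (ρ/2)(−2+3sin²α), p₂ = (2a(ā−b)+(3/2)ρsin²α)cotα/(ā+b), p₃ = ((a−b)/(a+b))cotα, p₄ = D(p₃−p̄₃) + (1/2)(āp₂ − ap̄₂) + (3/2)ρ sinα cosα, and conj swaps a and ā. -/
/-
Writing `p₄ = D (p₃ - p̄₃) + ½ (ā p₂ - a p̄₂) + const` and differentiating in `a`, the terms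
`D ∂p₃/∂a` and `(a/2) ∂p̄₂/∂a` cancel against the first two terms of the left-hand side, for any
differentiable `p₂`, `p₃`. Since `D = a ā + const` and `p̄₃` does not depend on `a`, what remains
is `ā (p₃ - p̄₃) + (ā/2) ∂p₂/∂a - ½ p̄₂`, and the identity reduces to `∂p₂/∂a = 2 p̄₃`, which holds
because `p₂` is affine in `a` with slope `2 (ā - b) cot α / (ā + b)`.
-/

theorem half_mul_deriv_sub_mul_deriv_add_deriv_eq {D P Q : ℂ → ℂ → ℂ} {z w : ℂ} (C : ℂ)
    (hD : HasDerivAt (fun t => D t w) w z)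
    (hP : HasDerivAt (fun t => P t w) (2 * Q w z) z)
    (hP' : DifferentiableAt ℂ (fun t => P w t) z)
    (hQ : DifferentiableAt ℂ (fun t => Q t w) z)
    (hQ' : HasDerivAt (fun t => Q w t) 0 z) :
    z / 2 * deriv (fun t => P w t) z - D z w * deriv (fun t => Q t w) z +
      deriv (fun t => D t w * (Q t w - Q w t) + 1 / 2 * (w * P t w - t * P w t) + C) z =
      -(1 / 2) * P w z + w * Q z w := by
  have h : HasDerivAt (fun t => D t w * (Q t w - Q w t) + 1 / 2 * (w * P t w - t * P w t) + C)
      (w * (Q z w - Q w z) + D z w * (deriv (fun t => Q t w) z - 0) +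
        1 / 2 * (w * (2 * Q w z) - (1 * P w z + z * deriv (fun t => P w t) z))) z :=
    ((hD.mul (hQ.hasDerivAt.sub hQ')).add
      (((hP.const_mul w).sub ((hasDerivAt_id' z).mul hP'.hasDerivAt)).const_mul (1 / 2))).add_const C
  rw [h.deriv]
  ring

theorem stmt13_general (ρ b α : ℝ) (cot : ℂ)
    (D p₂ p₃ p₄ : ℂ → ℂ → ℂ)
    (hD : ∀ z w, D z w = z * w + ((ρ : ℂ) / 2) * (-2 + 3 * (Real.sin α : ℂ) ^ 2))
    (hp₂ : ∀ z w, p₂ z w = (2 * z * (w - (b : ℂ)) + (3 / 2 : ℂ) * (ρ : ℂ) * (Real.sin α : ℂ) ^ 2) *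
      cot / (w + (b : ℂ)))
    (hp₃ : ∀ z w, p₃ z w = ((z - (b : ℂ)) / (z + (b : ℂ))) * cot)
    (hp₄ : ∀ z w, p₄ z w = D z w * (p₃ z w - p₃ w z) +
      (1 / 2 : ℂ) * (w * p₂ z w - z * p₂ w z) +
      (3 / 2 : ℂ) * (ρ : ℂ) * (Real.sin α : ℂ) * (Real.cos α : ℂ))
    (z w : ℂ) (hz : z + (b : ℂ) ≠ 0) :
    -- `conj (∂p₂/∂ā)` evaluated at `(z, w)` is `∂p₂/∂ā` with arguments swapped, i.e.
    -- `deriv (fun t => p₂ w t) z`.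
    (z / 2) * deriv (fun t => p₂ w t) z - D z w * deriv (fun t => p₃ t w) z +
      deriv (fun t => p₄ t w) z = -(1 / 2 : ℂ) * p₂ w z + w * p₃ z w := by
  have hD_deriv : HasDerivAt (fun t => D t w) w z := by
    simp_rw [hD]
    simpa using ((hasDerivAt_id' z).mul_const w).add_const ((ρ : ℂ) / 2 * (-2 + 3 * Real.sin α ^ 2))
  have hp₂_deriv : HasDerivAt (fun t => p₂ t w) (2 * p₃ w z) z := by
    simp_rw [hp₂, hp₃]
    refine (((((hasDerivAt_id' z).const_mul 2).mul_const (w - b)).add_const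
      ((3 / 2 : ℂ) * ρ * Real.sin α ^ 2)).mul_const cot).div_const (w + b) |>.congr_deriv ?_
    ring
  have hp₂_swap_diff : DifferentiableAt ℂ (fun t => p₂ w t) z := by
    simp_rw [hp₂]
    fun_prop (disch := exact hz)
  have hp₃_diff : DifferentiableAt ℂ (fun t => p₃ t w) z := by
    simp_rw [hp₃]
    fun_prop (disch := exact hz)
  have hp₃_swap_deriv : HasDerivAt (fun t => p₃ w t) 0 z := by
    simp_rw [hp₃]
    exact hasDerivAt_const _ _
  simp_rw [hp₄]
  exact half_mul_deriv_sub_mul_deriv_add_deriv_eq _ hD_deriv hp₂_deriv hp₂_swap_diff hp₃_diff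
    hp₃_swap_deriv

/-- With `a` and `ā` treated as independent complex variables `z`, `w`:
`(a/2)·conj(∂p₂/∂ā) − D·∂p₃/∂a + ∂p₄/∂a = −(1/2)p̄₂ + ā·p₃`.
The conjugate of a rational expression in `(a, ā)` with real coefficients swaps `a ↔ ā`. -/
theorem stmt13 (ρ b α : ℝ) (hb : 0 < b) (hsin : Real.sin α ≠ 0)
    (cot : ℂ) (hcot : cot = ((Real.cos α / Real.sin α : ℝ) : ℂ))
    (D p₂ p₃ p₄ : ℂ → ℂ → ℂ)
    (hD : ∀ z w, D z w = z * w + ((ρ : ℂ) / 2) * (-2 + 3 * (Real.sin α : ℂ) ^ 2))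
    (hp₂ : ∀ z w, p₂ z w = (2 * z * (w - (b : ℂ)) + (3 / 2 : ℂ) * (ρ : ℂ) * (Real.sin α : ℂ) ^ 2) *
      cot / (w + (b : ℂ)))
    (hp₃ : ∀ z w, p₃ z w = ((z - (b : ℂ)) / (z + (b : ℂ))) * cot)
    (hp₄ : ∀ z w, p₄ z w = D z w * (p₃ z w - p₃ w z) +
      (1 / 2 : ℂ) * (w * p₂ z w - z * p₂ w z) +
      (3 / 2 : ℂ) * (ρ : ℂ) * (Real.sin α : ℂ) * (Real.cos α : ℂ))
    (z w : ℂ) (hz : z + (b : ℂ) ≠ 0) (hw : w + (b : ℂ) ≠ 0) :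
    -- `conj (∂p₂/∂ā)` evaluated at `(z, w)` is `∂p₂/∂ā` with arguments swapped, i.e.
    -- `deriv (fun t => p₂ w t) z`.
    (z / 2) * deriv (fun t => p₂ w t) z - D z w * deriv (fun t => p₃ t w) z +
      deriv (fun t => p₄ t w) z = -(1 / 2 : ℂ) * p₂ w z + w * p₃ z w :=
  stmt13_general ρ b α cot D p₂ p₃ p₄ hD hp₂ hp₃ hp₄ z w hz
end

section
/- Combining the previous identity with the paper's computation: (a/2)·conj(∂p₂/∂ā) − D·(∂p₃/∂a) + ∂p₄/∂a = −3ρ sin α cos α/(4(a+b)), with all notation as in the paper (D = aā + (ρ/2)(−2+3sin²α), etc.). -/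
/-!
Differentiating `p₄ = D (p₃ - p̄₃) + ½ (ā p₂ - a p̄₂) + const` by the product rule, the terms
`D ∂p₃/∂a` and `(a/2) ∂p̄₂/∂a` cancel against the other two summands, leaving
`(∂D/∂a)(p₃ - p̄₃) + (ā/2) ∂p₂/∂a - p̄₂/2`. For the paper's functions this is `ā p₃ - p̄₂/2`,
and in `ā p₃ - p̄₂/2` the terms in `ā` cancel, leaving `-(3/4) ρ sin² α cot α / (a + b)`.
-/

theorem deriv_combination_eq_of_p₄_eq {D p₂ p₃ p₄ : ℂ → ℂ → ℂ} {C z w : ℂ}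
    (hp₄ : ∀ t, p₄ t w = D t w * (p₃ t w - p₃ w t) + (1 / 2 : ℂ) * (w * p₂ t w - t * p₂ w t) + C)
    (hD : DifferentiableAt ℂ (fun t => D t w) z)
    (h₃ : DifferentiableAt ℂ (fun t => p₃ t w) z) (h₃' : DifferentiableAt ℂ (fun t => p₃ w t) z)
    (h₂ : DifferentiableAt ℂ (fun t => p₂ t w) z) (h₂' : DifferentiableAt ℂ (fun t => p₂ w t) z) :
    z / 2 * deriv (fun t => p₂ w t) z - D z w * deriv (fun t => p₃ t w) z +
        deriv (fun t => p₄ t w) z =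
      deriv (fun t => D t w) z * (p₃ z w - p₃ w z) - D z w * deriv (fun t => p₃ w t) z +
        w / 2 * deriv (fun t => p₂ t w) z - p₂ w z / 2 := by
  have h : HasDerivAt (fun t => p₄ t w)
      (deriv (fun t => D t w) z * (p₃ z w - p₃ w z) +
        D z w * (deriv (fun t => p₃ t w) z - deriv (fun t => p₃ w t) z) +
        1 / 2 * (w * deriv (fun t => p₂ t w) z - (1 * p₂ w z + z * deriv (fun t => p₂ w t) z))) z := by
    simp only [hp₄]
    exact ((hD.hasDerivAt.mul (h₃.hasDerivAt.sub h₃'.hasDerivAt)).add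
      (((h₂.hasDerivAt.const_mul w).sub ((hasDerivAt_id z).mul h₂'.hasDerivAt)).const_mul
        (1 / 2 : ℂ))).add_const C
  rw [h.deriv]
  ring

theorem sq_mul_div_self {K : Type*} [Field K] (a b : K) : a ^ 2 * (b / a) = a * b := by
  rcases eq_or_ne a 0 with rfl | ha
  · simp
  · field_simp

theorem stmt14_general (ρ b α : ℝ)
    (cot : ℂ) (hcot : cot = ((Real.cos α / Real.sin α : ℝ) : ℂ))
    (D p₂ p₃ p₄ : ℂ → ℂ → ℂ)
    (hD : ∀ z w, D z w = z * w + ((ρ : ℂ) / 2) * (-2 + 3 * (Real.sin α : ℂ) ^ 2))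
    (hp₂ : ∀ z w, p₂ z w = (2 * z * (w - (b : ℂ)) + (3 / 2 : ℂ) * (ρ : ℂ) * (Real.sin α : ℂ) ^ 2) *
      cot / (w + (b : ℂ)))
    (hp₃ : ∀ z w, p₃ z w = ((z - (b : ℂ)) / (z + (b : ℂ))) * cot)
    (hp₄ : ∀ z w, p₄ z w = D z w * (p₃ z w - p₃ w z) +
      (1 / 2 : ℂ) * (w * p₂ z w - z * p₂ w z) +
      (3 / 2 : ℂ) * (ρ : ℂ) * (Real.sin α : ℂ) * (Real.cos α : ℂ))
    (z w : ℂ) (hz : z + (b : ℂ) ≠ 0) :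
    -- `conj (∂p₂/∂ā)` evaluated at `(z, w)` is `∂p₂/∂ā` with arguments swapped, i.e.
    -- `deriv (fun t => p₂ w t) z`.
    (z / 2) * deriv (fun t => p₂ w t) z - D z w * deriv (fun t => p₃ t w) z +
      deriv (fun t => p₄ t w) z = -(3 * (ρ : ℂ) * (Real.sin α : ℂ) * (Real.cos α : ℂ)) / (4 * (z + (b : ℂ))) := by
  have hDw : HasDerivAt (fun t => D t w) w z := by
    simp only [hD]
    exact (((hasDerivAt_id z).mul_const w).add_const _).congr_deriv (one_mul w)
  have hp₃w : (fun t => p₃ w t) = fun _ => p₃ w w := by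
    simp only [hp₃]
  have hp₂w : HasDerivAt (fun t => p₂ t w) (2 * (w - b) * cot / (w + b)) z := by
    simp only [hp₂]
    exact ((((((hasDerivAt_id z).const_mul 2).mul_const (w - b)).add_const
      (3 / 2 * ρ * Real.sin α ^ 2 : ℂ)).mul_const cot).div_const (w + b)).congr_deriv (by ring)
  have h₃ : DifferentiableAt ℂ (fun t => p₃ t w) z := by
    simp only [hp₃]
    fun_prop (disch := exact hz)
  have h₂ : DifferentiableAt ℂ (fun t => p₂ w t) z := by
    simp only [hp₂]
    fun_prop (disch := exact hz)
  rw [deriv_combination_eq_of_p₄_eq (hp₄ · w) hDw.differentiableAt h₃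
    (by rw [hp₃w]; fun_prop) hp₂w.differentiableAt h₂, hDw.deriv, hp₂w.deriv, hp₃w, deriv_const,
    hD, hp₂, hp₃, hp₃]
  have hcs := sq_mul_div_self (Real.sin α : ℂ) (Real.cos α)
  rw [hcot, Complex.ofReal_div, ← div_div]
  linear_combination (-(3 * ρ) / 4 / (z + b)) * hcs

/-- With `a` and `ā` treated as independent complex variables `z`, `w`:
`(a/2)·conj(∂p₂/∂ā) − D·∂p₃/∂a + ∂p₄/∂a = −(1/2)p̄₂ + ā·p₃`.
The conjugate of a rational expression in `(a, ā)` with real coefficients swaps `a ↔ ā`. -/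
theorem stmt14 (ρ b α : ℝ) (hb : 0 < b) (hsin : Real.sin α ≠ 0)
    (cot : ℂ) (hcot : cot = ((Real.cos α / Real.sin α : ℝ) : ℂ))
    (D p₂ p₃ p₄ : ℂ → ℂ → ℂ)
    (hD : ∀ z w, D z w = z * w + ((ρ : ℂ) / 2) * (-2 + 3 * (Real.sin α : ℂ) ^ 2))
    (hp₂ : ∀ z w, p₂ z w = (2 * z * (w - (b : ℂ)) + (3 / 2 : ℂ) * (ρ : ℂ) * (Real.sin α : ℂ) ^ 2) *
      cot / (w + (b : ℂ)))
    (hp₃ : ∀ z w, p₃ z w = ((z - (b : ℂ)) / (z + (b : ℂ))) * cot)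
    (hp₄ : ∀ z w, p₄ z w = D z w * (p₃ z w - p₃ w z) +
      (1 / 2 : ℂ) * (w * p₂ z w - z * p₂ w z) +
      (3 / 2 : ℂ) * (ρ : ℂ) * (Real.sin α : ℂ) * (Real.cos α : ℂ))
    (z w : ℂ) (hz : z + (b : ℂ) ≠ 0) (hw : w + (b : ℂ) ≠ 0) :
    -- `conj (∂p₂/∂ā)` evaluated at `(z, w)` is `∂p₂/∂ā` with arguments swapped, i.e.
    -- `deriv (fun t => p₂ w t) z`.
    (z / 2) * deriv (fun t => p₂ w t) z - D z w * deriv (fun t => p₃ t w) z +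
      deriv (fun t => p₄ t w) z = -(3 * (ρ : ℂ) * (Real.sin α : ℂ) * (Real.cos α : ℂ)) / (4 * (z + (b : ℂ))) :=
  stmt14_general ρ b α cot hcot D p₂ p₃ p₄ hD hp₂ hp₃ hp₄ z w hz
end

section
/- Let F(α,a,ā) = p₁p₂ − p₁p̄₇ + 2p̄₃p̄₇ + ∂p₂/∂α + (1/2)p̄₂·(∂p₂/∂ā) − ∂p̄₇/∂α − p₂·(∂p̄₇/∂a), with p₁, p₂, p₃, p₄, p₇ defined as in the paper. Then F(π/4, 0, 0) = 15ρ/(8b); in particular, if ρ ≠ 0 then F is not identically zero. -/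
/-! At `α = π/4` we have `cot α = 1` and `sin² α = sin α cos α = 1/2`, so on the slice
`α = π/4, a = 0` the coefficients are explicit rational functions of `ā`; in particular
`p₂ = 3ρ/(4(ā+b))` and `p₇ = -(7/2)ā²/(ā+b) - 3ā + 3ρ/(8b)`. On the slice `a = ā = 0` both `p₂`
and `p̄₇` are constant multiples of `sin α cos α`, whose derivative vanishes at `π/4`.
Substituting these values and derivatives into `F` leaves `15ρ/(8b)`. -/

open Real Filter Topology

lemma sin_pi_div_four_pos : 0 < sin (π / 4) := by
  rw [sin_pi_div_four]; positivity

lemma sin_sq_pi_div_four : sin (π / 4) ^ 2 = 1 / 2 := by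
  rw [sin_pi_div_four, div_pow, sq_sqrt zero_le_two]; norm_num

lemma sin_mul_cos_pi_div_four : sin (π / 4) * cos (π / 4) = 1 / 2 := by
  rw [cos_pi_div_four, ← sin_pi_div_four, ← sq, sin_sq_pi_div_four]

lemma hasDerivAt_sin_mul_cos_pi_div_four :
    HasDerivAt (fun t => sin t * cos t) 0 (π / 4) := by
  refine ((hasDerivAt_sin (π / 4)).mul (hasDerivAt_cos (π / 4))).congr_deriv ?_
  rw [cos_pi_div_four, sin_pi_div_four]; ring

lemma deriv_const_mul_sin_mul_cos_pi_div_four (c : ℂ) :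
    deriv (fun t : ℝ => c * ((sin t : ℂ) * (cos t : ℂ))) (π / 4) = 0 := by
  have h := hasDerivAt_sin_mul_cos_pi_div_four.ofReal_comp.const_mul c
  simp only [Complex.ofReal_mul, Complex.ofReal_zero, mul_zero] at h
  exact h.deriv

lemma hasDerivAt_const_div_add_const {𝕜 : Type*} [NontriviallyNormedField 𝕜] (c b x : 𝕜)
    (hx : x + b ≠ 0) : HasDerivAt (fun t => c / (t + b)) (-c / (x + b) ^ 2) x := by
  refine ((hasDerivAt_const x c).div ((hasDerivAt_id x).add_const b) hx).congr_deriv ?_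
  simp

lemma hasDerivAt_sq_div_add_const_zero {𝕜 : Type*} [NontriviallyNormedField 𝕜] {b : 𝕜}
    (hb : b ≠ 0) : HasDerivAt (fun t => t ^ 2 / (t + b)) 0 0 := by
  refine ((hasDerivAt_pow 2 (0 : 𝕜)).div ((hasDerivAt_id 0).add_const b)
    (by simpa)).congr_deriv ?_
  simp

namespace Coeff

noncomputable section

variable (ρ b : ℝ)

def cot (α : ℝ) : ℂ := ((Real.cos α / Real.sin α : ℝ) : ℂ)

def D (α : ℝ) (z w : ℂ) : ℂ := z * w + ((ρ : ℂ) / 2) * (-2 + 3 * (Real.sin α : ℂ) ^ 2)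

def p₁ (α : ℝ) (z w : ℂ) : ℂ :=
  ((z - (b : ℂ)) * (w - (b : ℂ)) + (3 / 2 : ℂ) * (ρ : ℂ) * (Real.sin α : ℂ) ^ 2) * cot α /
    ((z + (b : ℂ)) * (w + (b : ℂ)))

def p₂ (α : ℝ) (z w : ℂ) : ℂ :=
  (2 * z * (w - (b : ℂ)) + (3 / 2 : ℂ) * (ρ : ℂ) * (Real.sin α : ℂ) ^ 2) * cot α / (w + (b : ℂ))

def p₃ (α : ℝ) (z _w : ℂ) : ℂ := ((z - (b : ℂ)) / (z + (b : ℂ))) * cot α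

def p₄ (α : ℝ) (z w : ℂ) : ℂ :=
  D ρ α z w * (p₃ b α z w - p₃ b α w z) + (1 / 2 : ℂ) * (w * p₂ ρ b α z w - z * p₂ ρ b α w z) +
    (3 / 2 : ℂ) * (ρ : ℂ) * (Real.sin α : ℂ) * (Real.cos α : ℂ)

def p₇ (α : ℝ) (z w : ℂ) : ℂ :=
  (1 / (((ρ : ℂ) / 2) * (-2 + 3 * (Real.sin α : ℂ) ^ 2))) *
    (w * p₄ ρ b α z w + (3 * (ρ : ℂ) * (Real.sin α : ℂ) * (Real.cos α : ℂ) / (4 * (z + (b : ℂ)))) *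
      D ρ α z w)

-- `z, w` stand for `a, ā`, and a bar swaps them: `p̄ α z w = p α w z`.
def F (α : ℝ) (z w : ℂ) : ℂ :=
  p₁ ρ b α z w * p₂ ρ b α z w - p₁ ρ b α z w * p₇ ρ b α w z + 2 * p₃ b α w z * p₇ ρ b α w z +
    deriv (fun t => p₂ ρ b t z w) α +
    (1 / 2 : ℂ) * p₂ ρ b α w z * deriv (fun t => p₂ ρ b α z t) w -
    deriv (fun t => p₇ ρ b t w z) α - p₂ ρ b α z w * deriv (fun t => p₇ ρ b α w t) z

variable {ρ b}

lemma cot_pi_div_four : cot (π / 4) = 1 := by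
  rw [cot, cos_pi_div_four, ← sin_pi_div_four, div_self sin_pi_div_four_pos.ne']
  simp

lemma sin_sq_pi_div_four_ofReal : (Real.sin (π / 4) : ℂ) ^ 2 = 1 / 2 := by
  rw [← Complex.ofReal_pow, sin_sq_pi_div_four]; norm_num

lemma sin_mul_cos_pi_div_four_ofReal :
    (Real.sin (π / 4) : ℂ) * (Real.cos (π / 4) : ℂ) = 1 / 2 := by
  rw [← Complex.ofReal_mul, sin_mul_cos_pi_div_four]; norm_num

lemma D_pi_div_four_zero (w : ℂ) : D ρ (π / 4) 0 w = -ρ / 4 := by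
  rw [D, sin_sq_pi_div_four_ofReal]; ring

lemma p₁_pi_div_four (z w : ℂ) :
    p₁ ρ b (π / 4) z w = ((z - b) * (w - b) + 3 / 4 * ρ) / ((z + b) * (w + b)) := by
  rw [p₁, cot_pi_div_four, sin_sq_pi_div_four_ofReal]; ring

lemma p₂_pi_div_four_zero (w : ℂ) : p₂ ρ b (π / 4) 0 w = 3 / 4 * ρ / (w + b) := by
  rw [p₂, cot_pi_div_four, sin_sq_pi_div_four_ofReal]; ring

lemma p₃_pi_div_four (z w : ℂ) : p₃ b (π / 4) z w = (z - b) / (z + b) := by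
  rw [p₃, cot_pi_div_four, mul_one]

lemma p₄_pi_div_four_zero (hb : b ≠ 0) {w : ℂ} (hw : w + b ≠ 0) :
    p₄ ρ b (π / 4) 0 w = 7 / 8 * ρ * w / (w + b) + 3 / 4 * ρ := by
  have hb' : (b : ℂ) ≠ 0 := by exact_mod_cast hb
  rw [p₄, mul_assoc, sin_mul_cos_pi_div_four_ofReal, D_pi_div_four_zero, p₃_pi_div_four,
    p₃_pi_div_four, p₂_pi_div_four_zero, zero_add, zero_sub, neg_div_self hb']
  field_simp
  ring

lemma p₇_pi_div_four_zero (hρ : ρ ≠ 0) (hb : b ≠ 0) {w : ℂ} (hw : w + b ≠ 0) :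
    p₇ ρ b (π / 4) 0 w = -(7 / 2) * (w ^ 2 / (w + b)) - 3 * w + 3 * ρ / (8 * b) := by
  have hb' : (b : ℂ) ≠ 0 := by exact_mod_cast hb
  have hρ' : (ρ : ℂ) ≠ 0 := by exact_mod_cast hρ
  rw [p₇, mul_assoc (3 * (ρ : ℂ)), sin_mul_cos_pi_div_four_ofReal, sin_sq_pi_div_four_ofReal,
    p₄_pi_div_four_zero hb hw, D_pi_div_four_zero, zero_add]
  field_simp
  ring

lemma p₂_zero_zero {t : ℝ} (ht : Real.sin t ≠ 0) :
    p₂ ρ b t 0 0 = 3 / 2 * ρ / b * ((Real.sin t : ℂ) * (Real.cos t : ℂ)) := by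
  have ht' : (Real.sin t : ℂ) ≠ 0 := by exact_mod_cast ht
  rw [p₂, cot, Complex.ofReal_div]
  field_simp
  ring

lemma p₇_zero_zero (hρ : ρ ≠ 0) {t : ℝ} (ht : -2 + 3 * Real.sin t ^ 2 ≠ 0) :
    p₇ ρ b t 0 0 = 3 * ρ / (4 * b) * ((Real.sin t : ℂ) * (Real.cos t : ℂ)) := by
  have ht' : (-2 + 3 * (Real.sin t : ℂ) ^ 2) ≠ 0 := by exact_mod_cast ht
  have hρ' : (ρ : ℂ) ≠ 0 := by exact_mod_cast hρ
  rw [p₇, D]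
  field_simp
  ring

lemma deriv_p₂_pi_div_four_zero_zero : deriv (fun t => p₂ ρ b t 0 0) (π / 4) = 0 := by
  have h : (fun t => p₂ ρ b t 0 0) =ᶠ[𝓝 (π / 4)]
      fun t => 3 / 2 * ρ / b * ((Real.sin t : ℂ) * (Real.cos t : ℂ)) := by
    filter_upwards [continuous_sin.continuousAt.eventually_ne sin_pi_div_four_pos.ne']
      with t ht using p₂_zero_zero ht
  rw [h.deriv_eq, deriv_const_mul_sin_mul_cos_pi_div_four]

lemma deriv_p₇_pi_div_four_zero_zero (hρ : ρ ≠ 0) :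
    deriv (fun t => p₇ ρ b t 0 0) (π / 4) = 0 := by
  have hne : -2 + 3 * Real.sin (π / 4) ^ 2 ≠ 0 := by rw [sin_sq_pi_div_four]; norm_num
  have h : (fun t => p₇ ρ b t 0 0) =ᶠ[𝓝 (π / 4)]
      fun t => 3 * ρ / (4 * b) * ((Real.sin t : ℂ) * (Real.cos t : ℂ)) := by
    have hcont : ContinuousAt (fun t => -2 + 3 * Real.sin t ^ 2) (π / 4) := by fun_prop
    filter_upwards [hcont.eventually_ne hne] with t ht using p₇_zero_zero hρ ht
  rw [h.deriv_eq, deriv_const_mul_sin_mul_cos_pi_div_four]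

lemma deriv_p₂_pi_div_four_zero (hb : b ≠ 0) :
    deriv (fun w => p₂ ρ b (π / 4) 0 w) 0 = -(3 / 4 * ρ) / b ^ 2 := by
  have hb' : (0 : ℂ) + b ≠ 0 := by simpa using hb
  simp_rw [p₂_pi_div_four_zero]
  rw [(hasDerivAt_const_div_add_const _ _ 0 hb').deriv, zero_add]

lemma deriv_p₇_pi_div_four_zero (hρ : ρ ≠ 0) (hb : b ≠ 0) :
    deriv (fun w => p₇ ρ b (π / 4) 0 w) 0 = -3 := by
  have hb' : (0 : ℂ) + b ≠ 0 := by simpa using hb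
  have h : (fun w => p₇ ρ b (π / 4) 0 w) =ᶠ[𝓝 0]
      fun w => -(7 / 2) * (w ^ 2 / (w + b)) - 3 * w + 3 * ρ / (8 * b) := by
    have hcont : ContinuousAt (fun w : ℂ => w + b) 0 := by fun_prop
    filter_upwards [hcont.eventually_ne hb'] with w hw using p₇_pi_div_four_zero hρ hb hw
  rw [h.deriv_eq]
  refine ((((hasDerivAt_sq_div_add_const_zero (by exact_mod_cast hb)).const_mul _).sub
    ((hasDerivAt_id 0).const_mul 3)).add_const _).deriv.trans ?_
  simp

theorem F_pi_div_four_zero_zero (hρ : ρ ≠ 0) (hb : b ≠ 0) :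
    F ρ b (π / 4) 0 0 = 15 * ρ / (8 * b) := by
  have hb' : (b : ℂ) ≠ 0 := by exact_mod_cast hb
  rw [F, deriv_p₂_pi_div_four_zero_zero, deriv_p₇_pi_div_four_zero_zero hρ,
    deriv_p₂_pi_div_four_zero hb, deriv_p₇_pi_div_four_zero hρ hb,
    p₇_pi_div_four_zero hρ hb (by simpa), p₁_pi_div_four, p₂_pi_div_four_zero, p₃_pi_div_four]
  simp only [zero_add, zero_sub, neg_mul_neg, neg_div_self hb']
  field_simp
  ring

end

end Coeff

/-- `F(π/4, 0, 0) = 15ρ/(8b)`; in particular, if `ρ ≠ 0` then `F` is not identically zero.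
Here bars denote swapping `a ↔ ā` and `∂/∂α`, `∂/∂a`, `∂/∂ā` are partial derivatives with
`α`, `a = z`, `ā = w` treated as independent variables. -/
theorem stmt15 (ρ b : ℝ) (hρ : ρ ≠ 0) (hb : 0 < b)
    (cot : ℝ → ℂ) (hcot : ∀ α, cot α = ((Real.cos α / Real.sin α : ℝ) : ℂ))
    (D p₁ p₂ p₃ p₄ p₇ p₇b F : ℝ → ℂ → ℂ → ℂ)
    (hD : ∀ α z w, D α z w = z * w + ((ρ : ℂ) / 2) * (-2 + 3 * (Real.sin α : ℂ) ^ 2))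
    (hp₁ : ∀ α z w, p₁ α z w = ((z - (b : ℂ)) * (w - (b : ℂ)) +
      (3 / 2 : ℂ) * (ρ : ℂ) * (Real.sin α : ℂ) ^ 2) * cot α / ((z + (b : ℂ)) * (w + (b : ℂ))))
    (hp₂ : ∀ α z w, p₂ α z w = (2 * z * (w - (b : ℂ)) +
      (3 / 2 : ℂ) * (ρ : ℂ) * (Real.sin α : ℂ) ^ 2) * cot α / (w + (b : ℂ)))
    (hp₃ : ∀ α z w, p₃ α z w = ((z - (b : ℂ)) / (z + (b : ℂ))) * cot α)
    (hp₄ : ∀ α z w, p₄ α z w = D α z w * (p₃ α z w - p₃ α w z) +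
      (1 / 2 : ℂ) * (w * p₂ α z w - z * p₂ α w z) +
      (3 / 2 : ℂ) * (ρ : ℂ) * (Real.sin α : ℂ) * (Real.cos α : ℂ))
    (hp₇ : ∀ α z w, p₇ α z w = (1 / (((ρ : ℂ) / 2) * (-2 + 3 * (Real.sin α : ℂ) ^ 2))) *
      (w * p₄ α z w + (3 * (ρ : ℂ) * (Real.sin α : ℂ) * (Real.cos α : ℂ) / (4 * (z + (b : ℂ)))) *
        D α z w))
    (hp₇b : ∀ α z w, p₇b α z w = p₇ α w z)
    (hF : ∀ α z w, F α z w =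
      p₁ α z w * p₂ α z w - p₁ α z w * p₇b α z w + 2 * p₃ α w z * p₇b α z w +
      deriv (fun t => p₂ t z w) α +
      (1 / 2 : ℂ) * p₂ α w z * deriv (fun t => p₂ α z t) w -
      deriv (fun t => p₇b t z w) α - p₂ α z w * deriv (fun t => p₇b α t w) z) :
    F (Real.pi / 4) 0 0 = 15 * (ρ : ℂ) / (8 * (b : ℂ)) ∧ ¬ (∀ α z w, F α z w = 0) := by
  obtain rfl : cot = Coeff.cot := funext hcot
  obtain rfl : D = Coeff.D ρ := funext₃ hD
  obtain rfl : p₁ = Coeff.p₁ ρ b := funext₃ hp₁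
  obtain rfl : p₂ = Coeff.p₂ ρ b := funext₃ hp₂
  obtain rfl : p₃ = Coeff.p₃ b := funext₃ hp₃
  obtain rfl : p₄ = Coeff.p₄ ρ b := funext₃ hp₄
  obtain rfl : p₇ = Coeff.p₇ ρ b := funext₃ hp₇
  obtain rfl : p₇b = fun α z w => Coeff.p₇ ρ b α w z := funext₃ hp₇b
  obtain rfl : F = Coeff.F ρ b := funext₃ hF
  have hvalue := Coeff.F_pi_div_four_zero_zero hρ hb.ne'
  refine ⟨hvalue, fun hzero => ?_⟩
  have := hzero (π / 4) 0 0
  simp [hvalue, hρ, hb.ne'] at this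
end
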